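/- arXiv:1206.2448 — 7 statements merged into one kernel-verified Lean document; each statement's English description precedes it below -/
import Mathlib

section
/- Let the network have L links with capacities c_l > 0 and R flows with 0-1 routing matrix A = [a_{lr}] (a_{lr} = 1 iff flow r traverses link l; every flow traverses at least one link). Let each utility u_r : [0,∞) → ℝ be strictly increasing and concave. Let x* be an optimal solution of the NUM problem: maximize Σ_{r=1}^R u_r(x_r) subject to A x ≤ c, x ≥ 0. Define the strategy profile S* by s*_{lr} = a_{lr} · x*_r. Then S* is a pure Nash equilibrium of the capacity allocation game with uniform payoffs (all weights b_r = 1): for every link l and every vector s'_l with s'_{lr} ≥ 0, s'_{lr} = 0 whenever a_{lr} = 0, and Σ_r a_{lr} s'_{lr} ≤ c_l, the deviation payoff Σ_r a_{lr} u_r(min{s'_{lr} if a_{lr}=1, together with s*_{kr} over k ≠ l with a_{kr}=1}) is at most Σ_r a_{lr} u_r(x*_r). -/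
/-!
A unilateral deviation `s'` of link `l` from the profile in which every link plays `x*` yields
flow rates `y` equal to the end-to-end minima on the flows of `l` and to `x*` elsewhere. These
rates are NUM-feasible: on `l` they are at most `s'`, on every other link at most `x*`.
Optimality of `x*` gives `∑ u(y) ≤ ∑ u(x*)`, and since the two sides agree off the flows of `l`,
the payoff of `l` under the deviation is at most its payoff under `x*`.
-/

open Finset

/-- The minimum allocation for flow `r` over all links on its path. -/
noncomputable def linkMin {L R : ℕ} (a : Fin L → Fin R → Bool)
    (S : Fin L → Fin R → ℝ) (r : Fin R) : ℝ :=
  sInf {v : ℝ | ∃ k, a k r = true ∧ v = S k r}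

/-- Feasibility of a single player's (link's) strategy. -/
def FeasibleStrat {L R : ℕ} (a : Fin L → Fin R → Bool) (c : Fin L → ℝ)
    (l : Fin L) (s : Fin R → ℝ) : Prop :=
  (∀ r, 0 ≤ s r) ∧ (∀ r, a l r = false → s r = 0) ∧
    (∑ r ∈ Finset.univ.filter (fun r => a l r = true), s r) ≤ c l

/-- Feasibility of a full strategy profile. -/
def FeasibleProfile {L R : ℕ} (a : Fin L → Fin R → Bool) (c : Fin L → ℝ)
    (S : Fin L → Fin R → ℝ) : Prop :=
  ∀ l, FeasibleStrat a c l (S l)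

/-- Payoff of player `l`: weighted utilities of minimum allocations of its flows. -/
noncomputable def payoff {L R : ℕ} (a : Fin L → Fin R → Bool)
    (b : Fin R → ℝ) (u : Fin R → ℝ → ℝ) (l : Fin L) (S : Fin L → Fin R → ℝ) : ℝ :=
  ∑ r ∈ Finset.univ.filter (fun r => a l r = true), b r * u r (linkMin a S r)

/-- Pure Nash equilibrium: no player can strictly improve by a unilateral feasible deviation. -/
def NashEq {L R : ℕ} (a : Fin L → Fin R → Bool) (c : Fin L → ℝ)
    (b : Fin R → ℝ) (u : Fin R → ℝ → ℝ) (S : Fin L → Fin R → ℝ) : Prop :=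
  ∀ l s', FeasibleStrat a c l s' →
    payoff a b u l (Function.update S l s') ≤ payoff a b u l S

/-- Social welfare of a profile. -/
noncomputable def welfare {L R : ℕ} (a : Fin L → Fin R → Bool)
    (u : Fin R → ℝ → ℝ) (S : Fin L → Fin R → ℝ) : ℝ :=
  ∑ r, u r (linkMin a S r)

theorem Finset.sum_le_sum_of_sum_le_of_eq_off {ι M : Type*} [Fintype ι] [DecidableEq ι]
    [AddCommMonoid M] [PartialOrder M] [IsOrderedCancelAddMonoid M]
    {f g : ι → M} (s : Finset ι) (hfg : ∑ i, f i ≤ ∑ i, g i) (hoff : ∀ i ∉ s, f i = g i) :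
    ∑ i ∈ s, f i ≤ ∑ i ∈ s, g i := by
  rw [← sum_add_sum_compl s f, ← sum_add_sum_compl s g,
    sum_congr rfl fun i hi => hoff i (mem_compl.mp hi)] at hfg
  exact le_of_add_le_add_right hfg

section CapacityGame

variable {L R : ℕ} (a : Fin L → Fin R → Bool)

theorem linkMin_le {S : Fin L → Fin R → ℝ} {k : Fin L} {r : Fin R}
    (hS : ∀ j, a j r = true → 0 ≤ S j r) (hk : a k r = true) : linkMin a S r ≤ S k r :=
  csInf_le ⟨0, by rintro _ ⟨j, hj, rfl⟩; exact hS j hj⟩ ⟨k, hk, rfl⟩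

theorem linkMin_nonneg {S : Fin L → Fin R → ℝ} {r : Fin R}
    (hS : ∀ j, a j r = true → 0 ≤ S j r) : 0 ≤ linkMin a S r :=
  Real.sInf_nonneg (by rintro _ ⟨j, hj, rfl⟩; exact hS j hj)

noncomputable def deviationRates (x : Fin R → ℝ) (l : Fin L) (s' : Fin R → ℝ) : Fin R → ℝ :=
  fun r => if a l r then
    linkMin a (Function.update (fun k r => if a k r then x r else 0) l s') r else x r

variable {a} {x s' : Fin R → ℝ} {l : Fin L}

theorem update_uniform_nonneg (hx0 : ∀ r, 0 ≤ x r) (hs0 : ∀ r, 0 ≤ s' r) (k : Fin L) (r : Fin R) :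
    0 ≤ Function.update (fun k r => if a k r then x r else 0) l s' k r := by
  rcases eq_or_ne k l with rfl | hk
  · simpa using hs0 r
  · rw [Function.update_of_ne hk]
    split <;> simp [hx0 r]

theorem deviationRates_nonneg (hx0 : ∀ r, 0 ≤ x r) (hs0 : ∀ r, 0 ≤ s' r) (r : Fin R) :
    0 ≤ deviationRates a x l s' r := by
  unfold deviationRates
  split
  · exact linkMin_nonneg a fun j _ => update_uniform_nonneg hx0 hs0 j r
  · exact hx0 r

theorem deviationRates_le_strategy (hx0 : ∀ r, 0 ≤ x r) (hs0 : ∀ r, 0 ≤ s' r) {r : Fin R}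
    (hr : a l r = true) : deviationRates a x l s' r ≤ s' r := by
  simpa [deviationRates, hr] using
    linkMin_le a (fun j _ => update_uniform_nonneg (a := a) (l := l) hx0 hs0 j r) hr

theorem deviationRates_le_of_ne (hx0 : ∀ r, 0 ≤ x r) (hs0 : ∀ r, 0 ≤ s' r) {k : Fin L}
    {r : Fin R} (hk : k ≠ l) (hr : a k r = true) : deviationRates a x l s' r ≤ x r := by
  by_cases hlr : a l r = true
  · simpa [deviationRates, hlr, Function.update_of_ne hk, hr] using
      linkMin_le a (fun j _ => update_uniform_nonneg (a := a) (l := l) hx0 hs0 j r) hr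
  · simp [deviationRates, hlr]

theorem deviationRates_capacity {c : Fin L → ℝ} (hx0 : ∀ r, 0 ≤ x r)
    (hxc : ∀ k, ∑ r ∈ univ.filter (fun r => a k r = true), x r ≤ c k)
    (hs' : FeasibleStrat a c l s') (k : Fin L) :
    ∑ r ∈ univ.filter (fun r => a k r = true), deviationRates a x l s' r ≤ c k := by
  obtain ⟨hs0, -, hscap⟩ := hs'
  rcases eq_or_ne k l with rfl | hk
  · refine (sum_le_sum fun r hr => ?_).trans hscap
    exact deviationRates_le_strategy hx0 hs0 (mem_filter.mp hr).2
  · refine (sum_le_sum fun r hr => ?_).trans (hxc k)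
    exact deviationRates_le_of_ne hx0 hs0 hk (mem_filter.mp hr).2

end CapacityGame

theorem num_optimum_is_nash_uniform_general
    {L R : ℕ} (a : Fin L → Fin R → Bool) (c : Fin L → ℝ) (u : Fin R → ℝ → ℝ)
    (x : Fin R → ℝ)
    (hx0 : ∀ r, 0 ≤ x r)
    (hxc : ∀ l, (∑ r ∈ Finset.univ.filter (fun r => a l r = true), x r) ≤ c l)
    (hopt : ∀ y : Fin R → ℝ, (∀ r, 0 ≤ y r) →
      (∀ l, (∑ r ∈ Finset.univ.filter (fun r => a l r = true), y r) ≤ c l) →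
      (∑ r, u r (y r)) ≤ ∑ r, u r (x r)) :
    ∀ l : Fin L, ∀ s' : Fin R → ℝ, FeasibleStrat a c l s' →
      payoff a (fun _ => 1) u l
        (Function.update (fun k r => if a k r then x r else 0) l s') ≤
      ∑ r ∈ Finset.univ.filter (fun r => a l r = true), u r (x r) := by
  intro l s' hs'
  set y := deviationRates a x l s'
  have hwelfare : ∑ r, u r (y r) ≤ ∑ r, u r (x r) :=
    hopt y (deviationRates_nonneg hx0 hs'.1) (deviationRates_capacity hx0 hxc hs')
  have hpayoff : payoff a (fun _ => 1) u l
      (Function.update (fun k r => if a k r then x r else 0) l s') =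
      ∑ r ∈ univ.filter (fun r => a l r = true), u r (y r) :=
    sum_congr rfl fun r hr => by simp [y, deviationRates, (mem_filter.mp hr).2]
  rw [hpayoff]
  refine sum_le_sum_of_sum_le_of_eq_off _ hwelfare fun r hr => ?_
  simp [y, deviationRates, by simpa using hr]

/-- the NUM optimum, played by all links (each link allocates `x* r` to each of
its flows), is a pure Nash equilibrium of the capacity allocation game with uniform payoffs. -/
theorem num_optimum_is_nash_uniform
    {L R : ℕ} (a : Fin L → Fin R → Bool) (c : Fin L → ℝ) (u : Fin R → ℝ → ℝ)
    (x : Fin R → ℝ)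
    (hc : ∀ l, 0 < c l)
    (hflow : ∀ r : Fin R, ∃ l, a l r = true)
    (hmono : ∀ r, StrictMonoOn (u r) (Set.Ici 0))
    (hconc : ∀ r, ConcaveOn ℝ (Set.Ici 0) (u r))
    (hx0 : ∀ r, 0 ≤ x r)
    (hxc : ∀ l, (∑ r ∈ Finset.univ.filter (fun r => a l r = true), x r) ≤ c l)
    (hopt : ∀ y : Fin R → ℝ, (∀ r, 0 ≤ y r) →
      (∀ l, (∑ r ∈ Finset.univ.filter (fun r => a l r = true), y r) ≤ c l) →
      (∑ r, u r (y r)) ≤ ∑ r, u r (x r)) :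
    ∀ l : Fin L, ∀ s' : Fin R → ℝ, FeasibleStrat a c l s' →
      payoff a (fun _ => 1) u l
        (Function.update (fun k r => if a k r then x r else 0) l s') ≤
      ∑ r ∈ Finset.univ.filter (fun r => a l r = true), u r (x r) :=
  num_optimum_is_nash_uniform_general a c u x hx0 hxc hopt
end

section
/- Suppose there are no local flows, i.e. Σ_{l=1}^L a_{lr} ≥ 2 for every flow r, all link capacities satisfy c_l > 0, and utilities are isoelastic, u_r(x) = w_r x^{1-γ}/(1-γ) with w_r > 0 and 0 < γ < 1. Then the zero strategy profile (s_{lr} = 0 for all l, r) is a pure Nash equilibrium (for any weights b_r ≥ 0), its social welfare is 0, while the maximal social welfare over all feasible strategy profiles is strictly positive. Consequently the Price of Anarchy of the game is unbounded (the ratio of optimal welfare to worst-equilibrium welfare is infinite). -/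
open Finset

/-!
A flow's rate is the minimum of its allocations over the links of its path. When every flow
crosses at least two links and all other links allocate nothing, a single link cannot raise the
rate of any of its flows above `0`, so deviating from the zero profile gains nothing; yet
splitting every capacity evenly among the flows gives each flow a positive rate, and
isoelastic utilities are positive at positive rates.
-/

section LinkMin

variable {L R : ℕ} {a : Fin L → Fin R → Bool} {S : Fin L → Fin R → ℝ} {r : Fin R}

lemma linkMin_eq_zero (hS : ∀ k, a k r = true → 0 ≤ S k r) {k : Fin L} (hk : a k r = true)
    (hSk : S k r = 0) : linkMin a S r = 0 :=
  le_antisymm (Real.sInf_nonpos' ⟨0, ⟨k, hk, hSk.symm⟩, le_rfl⟩)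
    (Real.sInf_nonneg fun _ ⟨k', hk', hv⟩ => hv ▸ hS k' hk')

lemma linkMin_pos (hr : ∃ k, a k r = true) (hS : ∀ k, a k r = true → 0 < S k r) :
    0 < linkMin a S r := by
  obtain ⟨k, hk⟩ := hr
  set T := {v : ℝ | ∃ k, a k r = true ∧ v = S k r}
  have hfinite : T.Finite :=
    (Set.finite_range fun k => S k r).subset fun _ ⟨k, _, hv⟩ => ⟨k, hv.symm⟩
  have hne : T.Nonempty := ⟨S k r, k, hk, rfl⟩
  obtain ⟨k', hk', hv⟩ := hne.csInf_mem hfinite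
  rw [linkMin, hv]
  exact hS k' hk'

end LinkMin

section ZeroProfile

variable {L R : ℕ} (a : Fin L → Fin R → Bool)

lemma feasibleProfile_zero {c : Fin L → ℝ} (hc : ∀ l, 0 ≤ c l) :
    FeasibleProfile a c (fun _ _ => 0) :=
  fun l => ⟨fun _ => le_rfl, fun _ _ => rfl, by simpa using hc l⟩

lemma linkMin_zero (r : Fin R) : linkMin a (fun _ _ => 0) r = 0 :=
  le_antisymm (Real.sInf_nonpos fun _ ⟨_, _, hv⟩ => hv.le)
    (Real.sInf_nonneg fun _ ⟨_, _, hv⟩ => hv.ge)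

lemma welfare_zero {u : Fin R → ℝ → ℝ} (hu : ∀ r, u r 0 = 0) :
    welfare a u (fun _ _ => 0) = 0 :=
  Finset.sum_eq_zero fun r _ => by rw [linkMin_zero, hu r]

lemma linkMin_update_zero {l : Fin L} {s : Fin R → ℝ} (hs : ∀ r, 0 ≤ s r) {r : Fin R}
    (hr : 2 ≤ #{k | a k r = true}) :
    linkMin a (Function.update (fun _ _ => 0) l s) r = 0 := by
  obtain ⟨k, hk, hkl⟩ := Finset.exists_mem_ne hr l
  refine linkMin_eq_zero (fun k' _ => ?_) (Finset.mem_filter.mp hk).2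
    (by simp [Function.update_of_ne hkl])
  rcases eq_or_ne k' l with rfl | hk'l
  · simpa using hs r
  · simp [Function.update_of_ne hk'l]

lemma nashEq_zero {c : Fin L → ℝ} (b : Fin R → ℝ) (u : Fin R → ℝ → ℝ)
    (hnolocal : ∀ r, 2 ≤ #{k | a k r = true}) :
    NashEq a c b u (fun _ _ => 0) := by
  intro l s hs
  refine le_of_eq (Finset.sum_congr rfl fun r _ => ?_)
  rw [linkMin_update_zero a hs.1 (hnolocal r), linkMin_zero]

end ZeroProfile

section EvenSplit

variable {L R : ℕ} (a : Fin L → Fin R → Bool) (c : Fin L → ℝ)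

noncomputable def evenSplitProfile : Fin L → Fin R → ℝ :=
  fun l r => if a l r = true then c l / R else 0

lemma feasibleProfile_evenSplitProfile (hc : ∀ l, 0 ≤ c l) :
    FeasibleProfile a c (evenSplitProfile a c) := by
  intro l
  have hshare : 0 ≤ c l / R := div_nonneg (hc l) R.cast_nonneg
  refine ⟨fun r => ?_, fun r hr => by simp [evenSplitProfile, hr], ?_⟩
  · unfold evenSplitProfile; split_ifs <;> simp [hshare]
  · calc ∑ r ∈ univ.filter (fun r => a l r = true), evenSplitProfile a c l r
        = ∑ r ∈ univ.filter (fun r => a l r = true), c l / R :=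
          Finset.sum_congr rfl fun r hr => if_pos (mem_filter.mp hr).2
      _ ≤ ∑ _r : Fin R, c l / R :=
          Finset.sum_le_sum_of_subset_of_nonneg (filter_subset _ _) fun _ _ _ => hshare
      _ ≤ c l := by
          rcases R.eq_zero_or_pos with rfl | hR
          · simpa using hc l
          · simp [mul_div_cancel₀ (c l) (Nat.cast_ne_zero.mpr hR.ne' : (R : ℝ) ≠ 0)]

lemma linkMin_evenSplitProfile_pos (hR : 0 < R) (hc : ∀ l, 0 < c l) {r : Fin R}
    (hr : ∃ k, a k r = true) : 0 < linkMin a (evenSplitProfile a c) r :=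
  linkMin_pos hr fun k hk => by
    simpa [evenSplitProfile, hk] using div_pos (hc k) (Nat.cast_pos.mpr hR)

end EvenSplit

lemma welfare_pos {L R : ℕ} {a : Fin L → Fin R → Bool} {u : Fin R → ℝ → ℝ}
    {S : Fin L → Fin R → ℝ} (hR : 0 < R) (hu : ∀ r x, 0 < x → 0 < u r x)
    (hS : ∀ r, 0 < linkMin a S r) : 0 < welfare a u S :=
  Finset.sum_pos (fun r _ => hu r _ (hS r)) ⟨⟨0, hR⟩, mem_univ _⟩

theorem zero_profile_nash_welfare_zero_poa_unbounded_general
    {L R : ℕ} (a : Fin L → Fin R → Bool) (c : Fin L → ℝ)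
    (b : Fin R → ℝ) (w : Fin R → ℝ) (γ : ℝ) (u : Fin R → ℝ → ℝ)
    (hR : 0 < R)
    (hc : ∀ l, 0 < c l)
    (hnolocal : ∀ r : Fin R, 2 ≤ (Finset.univ.filter (fun l => a l r = true)).card)
    (hw : ∀ r, 0 < w r) (hγ1 : γ < 1)
    (hu : ∀ r x, u r x = w r * x ^ (1 - γ) / (1 - γ)) :
    FeasibleProfile a c (fun _ _ => 0) ∧
    NashEq a c b u (fun _ _ => 0) ∧
    welfare a u (fun _ _ => 0) = 0 ∧
    (∃ S', FeasibleProfile a c S' ∧ 0 < welfare a u S') ∧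
    (∀ M : ℝ, ∃ Sopt SNash : Fin L → Fin R → ℝ,
      FeasibleProfile a c Sopt ∧ FeasibleProfile a c SNash ∧ NashEq a c b u SNash ∧
      M * welfare a u SNash < welfare a u Sopt) := by
  have hγ : 0 < 1 - γ := sub_pos.mpr hγ1
  have hu_zero : ∀ r, u r 0 = 0 := fun r => by simp [hu, Real.zero_rpow hγ.ne']
  have hu_pos : ∀ r x, 0 < x → 0 < u r x := fun r x hx => by
    rw [hu]; exact div_pos (mul_pos (hw r) (Real.rpow_pos_of_pos hx _)) hγ
  have hflow : ∀ r, ∃ k, a k r = true := fun r => by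
    obtain ⟨k, hk⟩ := Finset.card_pos.mp (zero_lt_two.trans_le (hnolocal r))
    exact ⟨k, (mem_filter.mp hk).2⟩
  have hfeas0 := feasibleProfile_zero a fun l => (hc l).le
  have hnash := nashEq_zero a (c := c) b u hnolocal
  have hwelfare0 := welfare_zero a hu_zero
  have hfeas := feasibleProfile_evenSplitProfile a c fun l => (hc l).le
  have hwelfare := welfare_pos hR hu_pos fun r => linkMin_evenSplitProfile_pos a c hR hc (hflow r)
  refine ⟨hfeas0, hnash, hwelfare0, ⟨_, hfeas, hwelfare⟩, fun M => ⟨_, _, hfeas, hfeas0, hnash, ?_⟩⟩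
  rwa [hwelfare0, mul_zero]

/-- with no local flows and isoelastic utilities, the zero profile is a pure
Nash equilibrium with social welfare 0, while the maximal social welfare over feasible
profiles is strictly positive; consequently the Price of Anarchy is unbounded (the optimal
welfare exceeds any multiple of the worst-equilibrium welfare). -/
theorem zero_profile_nash_welfare_zero_poa_unbounded
    {L R : ℕ} (a : Fin L → Fin R → Bool) (c : Fin L → ℝ)
    (b : Fin R → ℝ) (w : Fin R → ℝ) (γ : ℝ) (u : Fin R → ℝ → ℝ)
    (hR : 0 < R)
    (hc : ∀ l, 0 < c l)
    (hflow : ∀ r : Fin R, ∃ l, a l r = true)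
    (hnolocal : ∀ r : Fin R, 2 ≤ (Finset.univ.filter (fun l => a l r = true)).card)
    (hw : ∀ r, 0 < w r) (hγ0 : 0 < γ) (hγ1 : γ < 1)
    (hu : ∀ r x, u r x = w r * x ^ (1 - γ) / (1 - γ))
    (hb : ∀ r, 0 ≤ b r) :
    FeasibleProfile a c (fun _ _ => 0) ∧
    NashEq a c b u (fun _ _ => 0) ∧
    welfare a u (fun _ _ => 0) = 0 ∧
    (∃ S', FeasibleProfile a c S' ∧ 0 < welfare a u S') ∧
    (∀ M : ℝ, ∃ Sopt SNash : Fin L → Fin R → ℝ,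
      FeasibleProfile a c Sopt ∧ FeasibleProfile a c SNash ∧ NashEq a c b u SNash ∧
      M * welfare a u SNash < welfare a u Sopt) :=
  zero_profile_nash_welfare_zero_poa_unbounded_general a c b w γ u hR hc hnolocal hw hγ1 hu
end

section
/- There exists an instance for which the global optimum of the NUM problem does not induce a Nash equilibrium of the capacity allocation game with path length payoffs. Concretely: take L = 10 links of equal capacity c_1 = … = c_10 = 6, and R = 2 flows, where flow 1 passes through all 10 links with utility u_1(x) = 10 log x, and flow 2 passes only through link 1 with utility u_2(x) = 2 log x; the path length weights are b_1 = 1/10 and b_2 = 1. Then: (i) the unique optimal solution of the NUM problem (maximize u_1(x_1) + u_2(x_2) subject to x_1 + x_2 ≤ 6 on link 1, x_1 ≤ 6 on links 2,…,10, x ≥ 0) is x* = (5, 1); (ii) the induced strategy profile (s_{l1} = 5 for all l, s_{12} = 1, s_{l2} = 0 for l ≥ 2) is not a pure Nash equilibrium, because player 1's feasible deviation s'_1 = (2, 4) yields payoff (1/10)·10·log 2 + 1·2·log 4 = log 2 + log 16, which exceeds the payoff (1/10)·10·log 5 + 1·2·log 1 = log 5 obtained at the induced profile. -/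
open Finset

/-!
At the proportionally fair optimum `x* = (5, 1)` the capacity of link 1 is shared with the common
marginal value `10 / 5 = 2 / 1 = 2`, so by the tangent-line bound `x log y ≤ x log x + (y - x)`
every feasible positive rate vector has welfare at most that of `x*`, strictly less unless it
equals `x*`. Link 1, however, weighs flow 1 by only `1 / 10` because that flow crosses ten links,
so as a player it prefers to shift capacity to flow 2: the deviation `(2, 4)` lowers the bottleneck
rate of flow 1 to `2` but raises its payoff from `log 5` to `log 2 + log 16 = log 32`.
-/

open Finset Real

section TangentLine

variable {x y μ : ℝ}

theorem mul_log_le_mul_log_add_mul_sub (hμ : 0 ≤ μ) (hx : 0 < x) (hy : 0 < y) :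
    μ * x * log y ≤ μ * x * log x + μ * (y - x) := by
  have h := mul_le_mul_of_nonneg_left (log_le_sub_one_of_pos (div_pos hy hx)) hx.le
  rw [log_div hy.ne' hx.ne', mul_sub_one, mul_div_cancel₀ _ hx.ne'] at h
  nlinarith

theorem mul_log_lt_mul_log_add_mul_sub (hμ : 0 < μ) (hx : 0 < x) (hy : 0 < y) (hne : y ≠ x) :
    μ * x * log y < μ * x * log x + μ * (y - x) := by
  have hne' : y / x ≠ 1 := fun h => hne ((div_eq_one_iff_eq hx.ne').1 h)
  have h := mul_lt_mul_of_pos_left (log_lt_sub_one_of_pos (div_pos hy hx) hne') hx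
  rw [log_div hy.ne' hx.ne', mul_sub_one, mul_div_cancel₀ _ hx.ne'] at h
  nlinarith

end TangentLine

section ProportionalFairness

variable {ι : Type*} [Fintype ι] {x y : ι → ℝ} {μ : ℝ}

theorem sum_add_mul_sub_le_sum (f : ι → ℝ) (hμ : 0 ≤ μ) (hsum : ∑ i, y i ≤ ∑ i, x i) :
    ∑ i, (f i + μ * (y i - x i)) ≤ ∑ i, f i := by
  rw [sum_add_distrib, ← mul_sum, sum_sub_distrib]
  nlinarith

theorem sum_mul_log_le_of_sum_le (hμ : 0 ≤ μ) (hx : ∀ i, 0 < x i) (hy : ∀ i, 0 < y i)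
    (hsum : ∑ i, y i ≤ ∑ i, x i) :
    ∑ i, μ * x i * log (y i) ≤ ∑ i, μ * x i * log (x i) :=
  (sum_le_sum fun i _ => mul_log_le_mul_log_add_mul_sub hμ (hx i) (hy i)).trans
    (sum_add_mul_sub_le_sum _ hμ hsum)

theorem eq_of_sum_mul_log_eq (hμ : 0 < μ) (hx : ∀ i, 0 < x i) (hy : ∀ i, 0 < y i)
    (hsum : ∑ i, y i ≤ ∑ i, x i)
    (heq : ∑ i, μ * x i * log (y i) = ∑ i, μ * x i * log (x i)) : y = x := by
  by_contra hne
  obtain ⟨i, hi⟩ := Function.ne_iff.1 hne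
  have hlt := sum_lt_sum (fun j _ => mul_log_le_mul_log_add_mul_sub hμ.le (hx j) (hy j))
    ⟨i, mem_univ i, mul_log_lt_mul_log_add_mul_sub hμ (hx i) (hy i) hi⟩
  linarith [sum_add_mul_sub_le_sum (fun i => μ * x i * log (x i)) hμ.le hsum]

end ProportionalFairness

section CapacityGame

variable {L R : ℕ} {a : Fin L → Fin R → Bool} {S : Fin L → Fin R → ℝ} {r : Fin R} {m : ℝ}

theorem linkMin_eq_of_forall_le {k : Fin L} (hk : a k r = true) (hm : S k r = m)
    (hle : ∀ j, a j r = true → m ≤ S j r) : linkMin a S r = m :=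
  IsLeast.csInf_eq ⟨⟨k, hk, hm.symm⟩, by rintro _ ⟨j, hj, rfl⟩; exact hle j hj⟩

variable {l : Fin L}

theorem payoff_eq_sum_of_forall_mem (hl : ∀ r, a l r = true) (b : Fin R → ℝ)
    (u : Fin R → ℝ → ℝ) : payoff a b u l S = ∑ r, b r * u r (linkMin a S r) := by
  rw [payoff, filter_true_of_mem fun r _ => hl r]

theorem sum_le_of_forall_mem (hl : ∀ r, a l r = true) {c : Fin L → ℝ} {y : Fin R → ℝ}
    (hy : ∀ l, ∑ r ∈ univ.filter (fun r => a l r = true), y r ≤ c l) : ∑ r, y r ≤ c l := by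
  simpa only [filter_true_of_mem fun r _ => hl r] using hy l

theorem feasibleStrat_of_forall_mem (hl : ∀ r, a l r = true) {c : Fin L → ℝ} {s : Fin R → ℝ}
    (hs : ∀ r, 0 ≤ s r) (hsum : ∑ r, s r ≤ c l) : FeasibleStrat a c l s := by
  refine ⟨hs, fun r hr => by simp [hl r] at hr, ?_⟩
  rwa [filter_true_of_mem fun r _ => hl r]

theorem not_nashEq_of_payoff_lt {c : Fin L → ℝ} {b : Fin R → ℝ} {u : Fin R → ℝ → ℝ}
    {s : Fin R → ℝ} (hs : FeasibleStrat a c l s)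
    (hlt : payoff a b u l S < payoff a b u l (Function.update S l s)) : ¬ NashEq a c b u S :=
  fun hN => (hN l s hs).not_gt hlt

end CapacityGame

/-- a concrete 10-link, 2-flow instance where the (unique) NUM optimum
`x* = (5,1)` does not induce a Nash equilibrium of the game with path length payoffs:
player 1's deviation `(2,4)` yields payoff `log 2 + log 16 > log 5`. -/
theorem num_optimum_not_nash_for_path_length_payoffs
    (a : Fin 10 → Fin 2 → Bool)
    (ha : ∀ l r, a l r = (decide (r = (0 : Fin 2)) || decide (l = (0 : Fin 10))))
    (c : Fin 10 → ℝ) (hc : ∀ l, c l = 6)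
    (u : Fin 2 → ℝ → ℝ)
    (hu0 : ∀ x, u 0 x = 10 * Real.log x) (hu1 : ∀ x, u 1 x = 2 * Real.log x)
    (b : Fin 2 → ℝ) (hb0 : b 0 = 1/10) (hb1 : b 1 = 1)
    (xstar : Fin 2 → ℝ) (hx0 : xstar 0 = 5) (hx1 : xstar 1 = 1)
    (S : Fin 10 → Fin 2 → ℝ) (hS : ∀ l r, S l r = if a l r then xstar r else 0)
    (s' : Fin 2 → ℝ) (hs'0 : s' 0 = 2) (hs'1 : s' 1 = 4) :
    -- (i) x* is the unique optimal solution of the NUM problem (among positive rates,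
    -- where the logarithmic utilities are finite)
    ((∀ y : Fin 2 → ℝ, (∀ r, 0 < y r) →
        (∀ l, (∑ r ∈ Finset.univ.filter (fun r => a l r = true), y r) ≤ c l) →
        (∑ r, u r (y r)) ≤ ∑ r, u r (xstar r)) ∧
      (∀ y : Fin 2 → ℝ, (∀ r, 0 < y r) →
        (∀ l, (∑ r ∈ Finset.univ.filter (fun r => a l r = true), y r) ≤ c l) →
        (∑ r, u r (y r)) = (∑ r, u r (xstar r)) → y = xstar)) ∧
    -- (ii) the induced profile is not a Nash equilibrium: the deviation (2,4) of player 1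
    -- is feasible and strictly improves its payoff from log 5 to log 2 + log 16
    FeasibleStrat a c 0 s' ∧
    payoff a b u 0 S = Real.log 5 ∧
    payoff a b u 0 (Function.update S 0 s') = Real.log 2 + Real.log 16 ∧
    payoff a b u 0 S < payoff a b u 0 (Function.update S 0 s') ∧
    ¬ NashEq a c b u S := by
  have hflow0 : ∀ l, a l 0 = true := fun l => by simp [ha]
  have hflow1 : ∀ l, a l 1 = true → l = 0 := fun l => by simp [ha]
  have hlink0 : ∀ r, a 0 r = true := fun r => by simp [ha]
  have hutil : ∀ y : Fin 2 → ℝ, ∑ r, u r (y r) = ∑ r, 2 * xstar r * log (y r) := fun y => by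
    simp only [Fin.sum_univ_two, hu0, hu1, hx0, hx1]; ring
  have hcap : ∀ y : Fin 2 → ℝ, (∀ l, ∑ r ∈ univ.filter (fun r => a l r = true), y r ≤ c l) →
      ∑ r, y r ≤ ∑ r, xstar r := fun y hy => by
    linarith [sum_le_of_forall_mem hlink0 hy, hc 0, Fin.sum_univ_two xstar]
  have hxpos : ∀ r, 0 < xstar r := by simp [Fin.forall_fin_two, hx0, hx1]
  have hS0 : linkMin a S 0 = 5 := linkMin_eq_of_forall_le (hflow0 0) (by simp [hS, hflow0, hx0])
    fun j _ => by simp [hS, hflow0, hx0]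
  have hS1 : linkMin a S 1 = 1 := linkMin_eq_of_forall_le (hlink0 1) (by simp [hS, hlink0, hx1])
    fun j hj => by obtain rfl := hflow1 j hj; simp [hS, hlink0, hx1]
  have hU0 : linkMin a (Function.update S 0 s') 0 = 2 :=
    linkMin_eq_of_forall_le (hflow0 0) (by simp [hs'0]) fun j _ => by
      by_cases hj : j = 0 <;> simp [hj, hS, hflow0, hx0, hs'0]; norm_num
  have hU1 : linkMin a (Function.update S 0 s') 1 = 4 :=
    linkMin_eq_of_forall_le (hlink0 1) (by simp [hs'1]) fun j hj => by
      obtain rfl := hflow1 j hj; simp [hs'1]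
  have hfeas : FeasibleStrat a c 0 s' :=
    feasibleStrat_of_forall_mem hlink0 (by simp [Fin.forall_fin_two, hs'0, hs'1])
      (by simp [Fin.sum_univ_two, hs'0, hs'1, hc]; norm_num)
  have hpayS : payoff a b u 0 S = log 5 := by
    simp [payoff_eq_sum_of_forall_mem hlink0, Fin.sum_univ_two, hS0, hS1, hb0, hb1, hu0, hu1]
  have hpayU : payoff a b u 0 (Function.update S 0 s') = log 2 + log 16 := by
    rw [payoff_eq_sum_of_forall_mem hlink0, Fin.sum_univ_two, hU0, hU1, hb0, hb1, hu0, hu1,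
      show (16 : ℝ) = 4 ^ 2 by norm_num, log_pow]
    push_cast; ring
  have hlt : log 5 < log 2 + log 16 := by
    rw [← log_mul (by norm_num) (by norm_num)]; exact log_lt_log (by norm_num) (by norm_num)
  refine ⟨⟨fun y hy hyc => ?_, fun y hy hyc heq => ?_⟩, hfeas, hpayS, hpayU, ?_, ?_⟩
  · simpa only [hutil] using sum_mul_log_le_of_sum_le zero_le_two hxpos hy (hcap y hyc)
  · exact eq_of_sum_mul_log_eq two_pos hxpos hy (hcap y hyc) (by simpa only [hutil] using heq)
  · rwa [hpayS, hpayU]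
  · exact not_nashEq_of_payoff_lt hfeas (by rwa [hpayS, hpayU])
end

section
/- Let f_m : [0,∞) → ℝ, m = 1,…,M, be continuous, strictly increasing, strictly concave and twice-differentiable functions. For β ≥ 0 let α*(β) ∈ ℝ^M denote the (unique) maximizer of Σ_{m=1}^M f_m(α_m) over the set {α ∈ ℝ^M : α_m ≥ 0 for all m, Σ_{m=1}^M α_m = β}. Then each component α*_m(β) is a nondecreasing function of β: if 0 ≤ β₁ ≤ β₂, then α*_m(β₁) ≤ α*_m(β₂) for every m = 1,…,M. -/
open Finset

/-! Exchange argument. If `α*(β₁) m > α*(β₂) m` then, the budgets being ordered, some other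
component satisfies `α*(β₁) k < α*(β₂) k`. Optimality forbids moving a small amount `ε` from `m`
to `k` in `α*(β₁)` and from `k` to `m` in `α*(β₂)`; strict concavity makes the increment
`u ↦ f (u + ε) - f u` strictly decreasing, and the four resulting inequalities between increments
of `f m` and `f k` close into a strict cycle. -/

theorem StrictConcaveOn.increment_lt_increment {s : Set ℝ} {f : ℝ → ℝ}
    (hf : StrictConcaveOn ℝ s f) {a b t : ℝ} (ha : a ∈ s) (hbt : b + t ∈ s) (hab : a < b)
    (ht : 0 < t) : f (b + t) - f b < f (a + t) - f a := by
  have hb : b ∈ s := hf.1.ordConnected.out ha hbt ⟨hab.le, by linarith⟩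
  have hat : a + t ∈ s := hf.1.ordConnected.out ha hbt ⟨by linarith, by linarith⟩
  have hslope_b := hf.secant_strict_mono hbt ha hb (by linarith) (by linarith) hab
  rw [← neg_div_neg_eq, ← neg_div_neg_eq (f a - _), neg_sub, neg_sub, neg_sub, neg_sub]
    at hslope_b
  have hslope_a := hf.secant_strict_mono ha hat hbt (by linarith) (by linarith) (by linarith)
  have := hslope_b.trans hslope_a
  rwa [add_sub_cancel_left, add_sub_cancel_left, div_lt_div_iff_of_pos_right ht] at this

section Allocation

variable {ι : Type*} [Fintype ι] [DecidableEq ι]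

def budgetSet (β : ℝ) : Set (ι → ℝ) :=
  {y | (∀ i, 0 ≤ y i) ∧ ∑ i, y i = β}

theorem add_single_sub_single_mem_budgetSet {β ε : ℝ} {x : ι → ℝ} (hx : x ∈ budgetSet β)
    (k m : ι) (hε : 0 ≤ ε) (hεx : ε ≤ x m) :
    x + Pi.single k ε - Pi.single m ε ∈ budgetSet β := by
  refine ⟨fun i => ?_, ?_⟩
  · have hk : 0 ≤ Pi.single (M := fun _ => ℝ) k ε i := by
      rcases eq_or_ne i k with rfl | h <;> simp [*]
    rcases eq_or_ne i m with rfl | h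
    · simp only [Pi.add_apply, Pi.sub_apply, Pi.single_eq_same]
      linarith
    · simp only [Pi.add_apply, Pi.sub_apply, Pi.single_eq_of_ne h]
      linarith [hx.1 i]
  · simp [sum_add_distrib, sum_sub_distrib, hx.2]

theorem sum_apply_add_single_sub_single (g : ι → ℝ → ℝ) (x : ι → ℝ) {k m : ι} (hkm : k ≠ m)
    (ε : ℝ) :
    ∑ i, g i ((x + Pi.single k ε - Pi.single m ε : ι → ℝ) i) =
      ∑ i, g i (x i) + (g k (x k + ε) - g k (x k)) - (g m (x m) - g m (x m - ε)) := by
  have hdiff : ∑ i, (g i ((x + Pi.single k ε - Pi.single m ε : ι → ℝ) i) - g i (x i)) =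
      (g k (x k + ε) - g k (x k)) + (g m (x m - ε) - g m (x m)) := by
    rw [Fintype.sum_eq_add k m hkm]
    · simp [hkm.symm]
    · rintro i ⟨hik, him⟩
      simp [hik, him]
  rw [sum_sub_distrib] at hdiff
  linarith

variable {f : ι → ℝ → ℝ} {β : ℝ} {x : ι → ℝ}

theorem IsMaxOn.increment_le_decrement
    (hmax : IsMaxOn (fun y => ∑ i, f i (y i)) (budgetSet β) x) (hx : x ∈ budgetSet β)
    {k m : ι} (hkm : k ≠ m) {ε : ℝ} (hε : 0 ≤ ε) (hεx : ε ≤ x m) :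
    f k (x k + ε) - f k (x k) ≤ f m (x m) - f m (x m - ε) := by
  have hle : ∑ i, f i ((x + Pi.single k ε - Pi.single m ε : ι → ℝ) i) ≤ ∑ i, f i (x i) :=
    hmax (add_single_sub_single_mem_budgetSet hx k m hε hεx)
  rw [sum_apply_add_single_sub_single f x hkm] at hle
  linarith

theorem le_of_isMaxOn_budgetSet (hconc : ∀ i, StrictConcaveOn ℝ (Set.Ici 0) (f i))
    {β₁ β₂ : ℝ} (h12 : β₁ ≤ β₂) {x y : ι → ℝ}
    (hx : x ∈ budgetSet β₁) (hxmax : IsMaxOn (fun z => ∑ i, f i (z i)) (budgetSet β₁) x)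
    (hy : y ∈ budgetSet β₂) (hymax : IsMaxOn (fun z => ∑ i, f i (z i)) (budgetSet β₂) y)
    (m : ι) : x m ≤ y m := by
  by_contra! hym
  obtain ⟨k, hxk⟩ : ∃ k, x k < y k := by
    by_contra! hyx
    have := sum_lt_sum (fun i _ => hyx i) ⟨m, mem_univ m, hym⟩
    linarith [hx.2, hy.2]
  have hkm : k ≠ m := by rintro rfl; linarith
  obtain ⟨ε, hε, hεmin⟩ := exists_between (lt_min (sub_pos.2 hym) (sub_pos.2 hxk))
  obtain ⟨hεm, hεk⟩ := lt_min_iff.1 hεmin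
  have hincr_m := (hconc m).increment_lt_increment (hy.1 m)
    (show x m - ε + ε ∈ Set.Ici 0 by simpa using hx.1 m) (by linarith) hε
  have hincr_k := (hconc k).increment_lt_increment (hx.1 k)
    (show y k - ε + ε ∈ Set.Ici 0 by simpa using hy.1 k) (by linarith) hε
  rw [sub_add_cancel] at hincr_m hincr_k
  refine lt_irrefl (f k (x k + ε) - f k (x k)) ?_
  calc f k (x k + ε) - f k (x k)
      ≤ f m (x m) - f m (x m - ε) :=
        hxmax.increment_le_decrement hx hkm hε.le (by linarith [hy.1 m])
    _ < f m (y m + ε) - f m (y m) := hincr_m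
    _ ≤ f k (y k) - f k (y k - ε) :=
        hymax.increment_le_decrement hy hkm.symm hε.le (by linarith [hx.1 k])
    _ < f k (x k + ε) - f k (x k) := hincr_k

end Allocation

theorem budget_allocation_components_monotone_general
    {M : ℕ} (f : Fin M → ℝ → ℝ)
    (hconc : ∀ m, StrictConcaveOn ℝ (Set.Ici 0) (f m))
    (α : ℝ → Fin M → ℝ)
    (hα : ∀ β : ℝ, 0 ≤ β →
      (∀ m, 0 ≤ α β m) ∧ (∑ m, α β m) = β ∧
      (∀ y : Fin M → ℝ, (∀ m, 0 ≤ y m) → (∑ m, y m) = β →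
        (∑ m, f m (y m)) ≤ ∑ m, f m (α β m))) :
    ∀ β₁ β₂ : ℝ, 0 ≤ β₁ → β₁ ≤ β₂ → ∀ m, α β₁ m ≤ α β₂ m := by
  have hopt : ∀ β, 0 ≤ β →
      α β ∈ budgetSet β ∧ IsMaxOn (fun y => ∑ m, f m (y m)) (budgetSet β) (α β) := by
    intro β hβ
    obtain ⟨h0, hsum, hmax⟩ := hα β hβ
    exact ⟨⟨h0, hsum⟩, fun y hy => hmax y hy.1 hy.2⟩
  intro β₁ β₂ hβ₁ h12
  obtain ⟨hx, hxmax⟩ := hopt β₁ hβ₁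
  obtain ⟨hy, hymax⟩ := hopt β₂ (hβ₁.trans h12)
  exact le_of_isMaxOn_budgetSet hconc h12 hx hxmax hy hymax

/-- Lemma 1: for continuous, strictly increasing, strictly concave,
twice-differentiable `f_m`, each component of the (unique) maximizer of
`∑ f_m(α_m)` over nonnegative vectors summing to `β` is nondecreasing in `β`. -/
theorem budget_allocation_components_monotone
    {M : ℕ} (f : Fin M → ℝ → ℝ)
    (hcont : ∀ m, ContinuousOn (f m) (Set.Ici 0))
    (hmono : ∀ m, StrictMonoOn (f m) (Set.Ici 0))
    (hconc : ∀ m, StrictConcaveOn ℝ (Set.Ici 0) (f m))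
    (hsmooth : ∀ m, ContDiffOn ℝ 2 (f m) (Set.Ici 0))
    (α : ℝ → Fin M → ℝ)
    (hα : ∀ β : ℝ, 0 ≤ β →
      (∀ m, 0 ≤ α β m) ∧ (∑ m, α β m) = β ∧
      (∀ y : Fin M → ℝ, (∀ m, 0 ≤ y m) → (∑ m, y m) = β →
        (∑ m, f m (y m)) ≤ ∑ m, f m (α β m))) :
    ∀ β₁ β₂ : ℝ, 0 ≤ β₁ → β₁ ≤ β₂ → ∀ m, α β₁ m ≤ α β₂ m :=
  budget_allocation_components_monotone_general f hconc α hα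
end

section
/- Fix a player l and a strategy profile S = (s_1,…,s_L) of the capacity allocation game, and let s'_l be any feasible strategy of player l. Let T be a set of flows such that every r ∈ T satisfies a_{lr} = 1 and traverses at least one link other than l, and define m_r = min_{k ≠ l : a_{kr}=1} s_{kr} for r ∈ T. Define the strategy s''_l by s''_{lr} = min{s'_{lr}, m_r} for r ∈ T and s''_{lr} = s'_{lr} for r ∉ T. Then s''_l is feasible (s''_{lr} ≥ 0, s''_{lr} = 0 whenever a_{lr} = 0, and Σ_r a_{lr} s''_{lr} ≤ c_l), and it yields exactly the same payoff: Q_l(s''_l, S_{−l}) = Q_l(s'_l, S_{−l}). In particular, allocating to a flow more capacity than the minimum allocated to it by the other links on its path never changes the player's payoff. -/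
open Finset

/-- The informal `m_r`: the least allocation to flow `r` by a link other than `l`
(`0` when `l` is the only link on the path, since `sInf ∅ = 0` in `ℝ`). -/
noncomputable def othersMin {L R : ℕ} (a : Fin L → Fin R → Bool)
    (S : Fin L → Fin R → ℝ) (l : Fin L) (r : Fin R) : ℝ :=
  sInf {v : ℝ | ∃ k, k ≠ l ∧ a k r = true ∧ v = S k r}

section Capping

variable {L R : ℕ} {a : Fin L → Fin R → Bool} {S : Fin L → Fin R → ℝ} {l : Fin L}
  {r : Fin R}

theorem othersMin_nonneg (hS : ∀ k, 0 ≤ S k r) : 0 ≤ othersMin a S l r :=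
  Real.sInf_nonneg fun _ ⟨k, _, _, hv⟩ => hv ▸ hS k

theorem linkMin_update (g : Fin R → ℝ) (hl : a l r = true) :
    linkMin a (Function.update S l g) r =
      sInf (insert (g r) {v : ℝ | ∃ k, k ≠ l ∧ a k r = true ∧ v = S k r}) := by
  unfold linkMin
  congr 1
  ext v
  simp only [Set.mem_ofPred_eq, Set.mem_insert_iff]
  constructor
  · rintro ⟨k, hk, rfl⟩
    by_cases hkl : k = l
    · subst hkl
      simp
    · exact Or.inr ⟨k, hkl, hk, by simp [hkl]⟩
  · rintro (rfl | ⟨k, hkl, hk, rfl⟩)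
    · exact ⟨l, hl, by simp⟩
    · exact ⟨k, hk, by simp [hkl]⟩

theorem linkMin_update_of_exists_ne (g : Fin R → ℝ) (hl : a l r = true)
    (hother : ∃ k, k ≠ l ∧ a k r = true) :
    linkMin a (Function.update S l g) r = min (g r) (othersMin a S l r) := by
  obtain ⟨k, hkl, hk⟩ := hother
  have hfin : {v : ℝ | ∃ k, k ≠ l ∧ a k r = true ∧ v = S k r}.Finite :=
    (Set.finite_range fun k => S k r).subset fun _ ⟨k, _, _, hv⟩ => ⟨k, hv.symm⟩
  rw [linkMin_update g hl, csInf_insert hfin.bddBelow ⟨S k r, k, hkl, hk, rfl⟩]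
  rfl

end Capping

theorem FeasibleStrat.ite_min {L R : ℕ} {a : Fin L → Fin R → Bool} {c : Fin L → ℝ}
    {l : Fin L} {s m : Fin R → ℝ} {T : Finset (Fin R)} (hs : FeasibleStrat a c l s)
    (hT : ∀ r ∈ T, a l r = true) (hm : ∀ r ∈ T, 0 ≤ m r) :
    FeasibleStrat a c l (fun r => if r ∈ T then min (s r) (m r) else s r) := by
  obtain ⟨hnonneg, hoff, hcap⟩ := hs
  refine ⟨fun r => ?_, fun r hr => ?_, ?_⟩
  · dsimp only
    split_ifs with hrT
    · exact le_min (hnonneg r) (hm r hrT)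
    · exact hnonneg r
  · have hrT : r ∉ T := fun hrT => by simp [hT r hrT] at hr
    simpa [hrT] using hoff r hr
  · refine le_trans (sum_le_sum fun r _ => ?_) hcap
    split_ifs
    · exact min_le_left _ _
    · exact le_rfl

/-- Capping at `m_r` is invisible to the path minimum, which already is at most `m_r`. -/
theorem payoff_update_ite_min_othersMin {L R : ℕ} {a : Fin L → Fin R → Bool}
    (b : Fin R → ℝ) (u : Fin R → ℝ → ℝ) (S : Fin L → Fin R → ℝ) (l : Fin L)
    (s : Fin R → ℝ) {T : Finset (Fin R)}
    (hT : ∀ r ∈ T, a l r = true ∧ ∃ k, k ≠ l ∧ a k r = true) :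
    payoff a b u l (Function.update S l
        (fun r => if r ∈ T then min (s r) (othersMin a S l r) else s r)) =
      payoff a b u l (Function.update S l s) := by
  refine sum_congr rfl fun r hr => ?_
  have hl : a l r = true := (mem_filter.mp hr).2
  by_cases hrT : r ∈ T
  · rw [linkMin_update_of_exists_ne _ hl (hT r hrT).2,
      linkMin_update_of_exists_ne _ hl (hT r hrT).2, if_pos hrT, min_assoc, min_self]
  · rw [linkMin_update _ hl, linkMin_update _ hl, if_neg hrT]

theorem capping_at_others_minimum_preserves_payoff_general
    {L R : ℕ} (a : Fin L → Fin R → Bool) (c : Fin L → ℝ)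
    (b : Fin R → ℝ) (u : Fin R → ℝ → ℝ)
    (S : Fin L → Fin R → ℝ) (l : Fin L) (s' : Fin R → ℝ) (T : Finset (Fin R))
    (hS : FeasibleProfile a c S)
    (hs' : FeasibleStrat a c l s')
    (hT : ∀ r ∈ T, a l r = true ∧ ∃ k, k ≠ l ∧ a k r = true) :
    FeasibleStrat a c l
      (fun r => if r ∈ T then
        min (s' r) (sInf {v : ℝ | ∃ k, k ≠ l ∧ a k r = true ∧ v = S k r}) else s' r) ∧
    payoff a b u l (Function.update S l
      (fun r => if r ∈ T then
        min (s' r) (sInf {v : ℝ | ∃ k, k ≠ l ∧ a k r = true ∧ v = S k r}) else s' r)) =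
    payoff a b u l (Function.update S l s') :=
  ⟨hs'.ite_min (fun r hr => (hT r hr).1) fun r _ => othersMin_nonneg fun k => (hS k).1 r,
    payoff_update_ite_min_othersMin b u S l s' hT⟩

/-- cf. Lemma 2: capping, on a set `T` of flows that also traverse some
other link, player `l`'s allocations at the minimum allocated by the other links on the
flow's path yields a feasible strategy with exactly the same payoff. -/
theorem capping_at_others_minimum_preserves_payoff
    {L R : ℕ} (a : Fin L → Fin R → Bool) (c : Fin L → ℝ)
    (b : Fin R → ℝ) (u : Fin R → ℝ → ℝ)
    (S : Fin L → Fin R → ℝ) (l : Fin L) (s' : Fin R → ℝ) (T : Finset (Fin R))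
    (hc : ∀ k, 0 < c k)
    (hflow : ∀ r : Fin R, ∃ k, a k r = true)
    (hu : ∀ r, MonotoneOn (u r) (Set.Ici 0))
    (hb : ∀ r, 0 ≤ b r)
    (hS : FeasibleProfile a c S)
    (hs' : FeasibleStrat a c l s')
    (hT : ∀ r ∈ T, a l r = true ∧ ∃ k, k ≠ l ∧ a k r = true) :
    FeasibleStrat a c l
      (fun r => if r ∈ T then
        min (s' r) (sInf {v : ℝ | ∃ k, k ≠ l ∧ a k r = true ∧ v = S k r}) else s' r) ∧
    payoff a b u l (Function.update S l
      (fun r => if r ∈ T then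
        min (s' r) (sInf {v : ℝ | ∃ k, k ≠ l ∧ a k r = true ∧ v = S k r}) else s' r)) =
    payoff a b u l (Function.update S l s') :=
  capping_at_others_minimum_preserves_payoff_general a c b u S l s' T hS hs' hT
end

section
/- Fix a link l with capacity c_l > 0, a 0-1 row (a_{l1},…,a_{lR}) of the routing matrix with at least one nonzero entry, weights b_r > 0 and w_r > 0, and parameter 0 < γ < 1, and let u_r(x) = w_r x^{1-γ}/(1-γ). Then the unique maximizer of Σ_{r=1}^R a_{lr} b_r u_r(s_{lr}) over the set D_l = {s_l ∈ ℝ^R : s_{lr} ≥ 0 for all r, s_{lr} = 0 whenever a_{lr} = 0, Σ_{r} a_{lr} s_{lr} ≤ c_l} is given in closed form by s_{lr} = a_{lr} · c_l · (b_r w_r)^{1/γ} / Σ_{j=1}^R a_{lj} (b_j w_j)^{1/γ}. In particular, the optimal allocations of flows on a link are proportional to the quantities v_r = (b_r w_r)^{1/γ}. -/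
/-!
Each term `b_r u_r(x) = (b_r w_r) x^{1-γ} / (1-γ)` is strictly concave, so it lies below its
tangent line at `s_r`. For the proportional allocation the marginal utilities `b_r w_r s_r^{-γ}`
all equal `(V / c)^γ`, where `V = Σ_j (b_j w_j)^{1/γ}`; summing the tangent bounds gives
`Σ b u(t) ≤ Σ b u(s) + (V / c)^γ (Σ t - c) ≤ Σ b u(s)`, with strict inequality unless `t = s`.
-/

open Finset Real

lemma rpow_lt_tangent {p x y : ℝ} (hp0 : 0 < p) (hp1 : p < 1) (hx : 0 ≤ x) (hy : 0 < y)
    (hxy : x ≠ y) : x ^ p < y ^ p + p * y ^ (p - 1) * (x - y) := by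
  have hz : -1 ≤ x / y - 1 := by linarith [div_nonneg hx hy.le]
  have hz0 : x / y - 1 ≠ 0 := sub_ne_zero.2 fun h => hxy ((div_eq_one_iff_eq hy.ne').1 h)
  have hbernoulli := rpow_one_add_lt_one_add_mul_self hz hz0 hp0 hp1
  rw [add_sub_cancel, div_rpow hx hy.le] at hbernoulli
  have hyp : 0 < y ^ p := rpow_pos_of_pos hy p
  calc x ^ p = y ^ p * (x ^ p / y ^ p) := by field_simp
    _ < y ^ p * (1 + p * (x / y - 1)) := by gcongr
    _ = y ^ p + p * y ^ (p - 1) * (x - y) := by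
      rw [rpow_sub hy, rpow_one]; field_simp

lemma rpow_le_tangent {p x y : ℝ} (hp0 : 0 < p) (hp1 : p < 1) (hx : 0 ≤ x) (hy : 0 < y) :
    x ^ p ≤ y ^ p + p * y ^ (p - 1) * (x - y) := by
  rcases eq_or_ne x y with rfl | hxy
  · simp
  · exact (rpow_lt_tangent hp0 hp1 hx hy hxy).le

section EqualMarginals

variable {ι : Type*} {S : Finset ι} {κ s t : ι → ℝ} {p K : ℝ}

lemma sum_mul_rpow_le_tangent (hp0 : 0 < p) (hp1 : p < 1) (hκ : ∀ r ∈ S, 0 ≤ κ r)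
    (hs : ∀ r ∈ S, 0 < s r) (ht : ∀ r ∈ S, 0 ≤ t r) (hK : ∀ r ∈ S, κ r * s r ^ (p - 1) = K) :
    ∑ r ∈ S, κ r * t r ^ p ≤
      ∑ r ∈ S, κ r * s r ^ p + p * K * (∑ r ∈ S, t r - ∑ r ∈ S, s r) := by
  rw [← sum_sub_distrib, mul_sum, ← sum_add_distrib]
  refine sum_le_sum fun r hr => ?_
  calc κ r * t r ^ p ≤ κ r * (s r ^ p + p * s r ^ (p - 1) * (t r - s r)) :=
        mul_le_mul_of_nonneg_left (rpow_le_tangent hp0 hp1 (ht r hr) (hs r hr)) (hκ r hr)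
    _ = κ r * s r ^ p + p * K * (t r - s r) := by rw [← hK r hr]; ring

lemma sum_mul_rpow_lt_tangent (hp0 : 0 < p) (hp1 : p < 1) (hκ : ∀ r ∈ S, 0 < κ r)
    (hs : ∀ r ∈ S, 0 < s r) (ht : ∀ r ∈ S, 0 ≤ t r) (hK : ∀ r ∈ S, κ r * s r ^ (p - 1) = K)
    (hts : ∃ r ∈ S, t r ≠ s r) :
    ∑ r ∈ S, κ r * t r ^ p <
      ∑ r ∈ S, κ r * s r ^ p + p * K * (∑ r ∈ S, t r - ∑ r ∈ S, s r) := by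
  rw [← sum_sub_distrib, mul_sum, ← sum_add_distrib]
  have hpoint : ∀ r ∈ S, t r ≠ s r →
      κ r * t r ^ p < κ r * s r ^ p + p * K * (t r - s r) := fun r hr hne =>
    calc κ r * t r ^ p < κ r * (s r ^ p + p * s r ^ (p - 1) * (t r - s r)) :=
          mul_lt_mul_of_pos_left (rpow_lt_tangent hp0 hp1 (ht r hr) (hs r hr) hne) (hκ r hr)
      _ = κ r * s r ^ p + p * K * (t r - s r) := by rw [← hK r hr]; ring
  refine sum_lt_sum (fun r hr => ?_) (hts.imp fun r ⟨hr, hne⟩ => ⟨hr, hpoint r hr hne⟩)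
  rcases eq_or_ne (t r) (s r) with heq | hne
  · simp [heq]
  · exact (hpoint r hr hne).le

lemma sum_mul_rpow_le_of_marginal_eq (hp0 : 0 < p) (hp1 : p < 1) (hκ : ∀ r ∈ S, 0 ≤ κ r)
    (hs : ∀ r ∈ S, 0 < s r) (ht : ∀ r ∈ S, 0 ≤ t r) (hK : ∀ r ∈ S, κ r * s r ^ (p - 1) = K)
    (hK0 : 0 ≤ K) (hbudget : ∑ r ∈ S, t r ≤ ∑ r ∈ S, s r) :
    ∑ r ∈ S, κ r * t r ^ p ≤ ∑ r ∈ S, κ r * s r ^ p := by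
  have hslack : p * K * (∑ r ∈ S, t r - ∑ r ∈ S, s r) ≤ 0 :=
    mul_nonpos_of_nonneg_of_nonpos (by positivity) (by linarith)
  linarith [sum_mul_rpow_le_tangent hp0 hp1 hκ hs ht hK]

lemma eqOn_of_sum_mul_rpow_eq_of_marginal_eq (hp0 : 0 < p) (hp1 : p < 1)
    (hκ : ∀ r ∈ S, 0 < κ r) (hs : ∀ r ∈ S, 0 < s r) (ht : ∀ r ∈ S, 0 ≤ t r)
    (hK : ∀ r ∈ S, κ r * s r ^ (p - 1) = K) (hK0 : 0 ≤ K)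
    (hbudget : ∑ r ∈ S, t r ≤ ∑ r ∈ S, s r)
    (heq : ∑ r ∈ S, κ r * t r ^ p = ∑ r ∈ S, κ r * s r ^ p) :
    ∀ r ∈ S, t r = s r := by
  by_contra! hts
  have hslack : p * K * (∑ r ∈ S, t r - ∑ r ∈ S, s r) ≤ 0 :=
    mul_nonpos_of_nonneg_of_nonpos (by positivity) (by linarith)
  linarith [sum_mul_rpow_lt_tangent hp0 hp1 hκ hs ht hK hts]

end EqualMarginals

section Proportional

variable {ι : Type*} {S : Finset ι} {κ s : ι → ℝ} {γ c : ℝ}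

lemma sum_rpow_pos (hκ : ∀ r ∈ S, 0 < κ r) (hS : S.Nonempty) (y : ℝ) :
    0 < ∑ j ∈ S, κ j ^ y :=
  sum_pos (fun j hj => rpow_pos_of_pos (hκ j hj) y) hS

lemma proportional_pos (hc : 0 < c) (hκ : ∀ r ∈ S, 0 < κ r)
    (hs : ∀ r ∈ S, s r = c * κ r ^ (1 / γ) / ∑ j ∈ S, κ j ^ (1 / γ)) :
    ∀ r ∈ S, 0 < s r := fun r hr => by
  have hV := sum_rpow_pos hκ ⟨r, hr⟩ (1 / γ)
  rw [hs r hr]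
  exact div_pos (mul_pos hc (rpow_pos_of_pos (hκ r hr) _)) hV

lemma sum_proportional (hκ : ∀ r ∈ S, 0 < κ r) (hS : S.Nonempty)
    (hs : ∀ r ∈ S, s r = c * κ r ^ (1 / γ) / ∑ j ∈ S, κ j ^ (1 / γ)) :
    ∑ r ∈ S, s r = c := by
  have hV := sum_rpow_pos hκ hS (1 / γ)
  rw [sum_congr rfl hs, ← sum_div, ← mul_sum, mul_div_cancel_right₀ _ hV.ne']

lemma proportional_marginal_eq (hγ0 : 0 < γ) (hc : 0 < c) (hκ : ∀ r ∈ S, 0 < κ r)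
    (hs : ∀ r ∈ S, s r = c * κ r ^ (1 / γ) / ∑ j ∈ S, κ j ^ (1 / γ)) :
    ∀ r ∈ S, κ r * s r ^ (1 - γ - 1) = ((∑ j ∈ S, κ j ^ (1 / γ)) / c) ^ γ := fun r hr => by
  have hV := sum_rpow_pos hκ ⟨r, hr⟩ (1 / γ)
  set V := ∑ j ∈ S, κ j ^ (1 / γ)
  set v := κ r ^ (1 / γ) with hv_def
  have hv : 0 < v := rpow_pos_of_pos (hκ r hr) _
  have hcV : 0 < c / V := div_pos hc hV
  have hκv : κ r = v ^ γ := by rw [hv_def, one_div, rpow_inv_rpow (hκ r hr).le hγ0.ne']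
  rw [hs r hr, sub_sub_cancel_left, mul_div_right_comm, mul_rpow hcV.le hv.le, hκv,
    mul_left_comm, ← rpow_add hv, add_neg_cancel, rpow_zero, mul_one, rpow_neg hcV.le,
    ← inv_rpow hcV.le, inv_div]

end Proportional

/-- closed-form solution of the local one-step allocation problem on a
single link with isoelastic utilities: the unique maximizer allocates capacity
proportionally to `v_r = (b_r w_r)^(1/γ)`. -/
theorem single_link_closed_form_allocation
    {R : ℕ} (a : Fin R → Bool) (b w : Fin R → ℝ) (γ cl : ℝ)
    (u : Fin R → ℝ → ℝ) (s : Fin R → ℝ)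
    (ha : ∃ r, a r = true)
    (hb : ∀ r, 0 < b r) (hw : ∀ r, 0 < w r)
    (hγ0 : 0 < γ) (hγ1 : γ < 1) (hcl : 0 < cl)
    (hu : ∀ r x, u r x = w r * x ^ (1 - γ) / (1 - γ))
    (hs : ∀ r, s r = if a r = true then
        cl * (b r * w r) ^ (1 / γ) /
          (∑ j ∈ Finset.univ.filter (fun j => a j = true), (b j * w j) ^ (1 / γ))
      else 0) :
    -- s is feasible
    ((∀ r, 0 ≤ s r) ∧ (∀ r, a r = false → s r = 0) ∧
      (∑ r ∈ Finset.univ.filter (fun r => a r = true), s r) ≤ cl) ∧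
    -- s maximizes the weighted utility objective over the feasible set
    (∀ t : Fin R → ℝ, (∀ r, 0 ≤ t r) → (∀ r, a r = false → t r = 0) →
      (∑ r ∈ Finset.univ.filter (fun r => a r = true), t r) ≤ cl →
      (∑ r ∈ Finset.univ.filter (fun r => a r = true), b r * u r (t r)) ≤
        ∑ r ∈ Finset.univ.filter (fun r => a r = true), b r * u r (s r)) ∧
    -- and it is the unique maximizer
    (∀ t : Fin R → ℝ, (∀ r, 0 ≤ t r) → (∀ r, a r = false → t r = 0) →
      (∑ r ∈ Finset.univ.filter (fun r => a r = true), t r) ≤ cl →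
      (∑ r ∈ Finset.univ.filter (fun r => a r = true), b r * u r (t r)) =
        (∑ r ∈ Finset.univ.filter (fun r => a r = true), b r * u r (s r)) →
      t = s) := by
  set S := univ.filter fun r => a r = true
  have hS : S.Nonempty := ha.imp fun r hr => mem_filter.2 ⟨mem_univ _, hr⟩
  have hκ : ∀ r ∈ S, 0 < b r * w r := fun r _ => mul_pos (hb r) (hw r)
  have hsS : ∀ r ∈ S, s r = cl * (b r * w r) ^ (1 / γ) / ∑ j ∈ S, (b j * w j) ^ (1 / γ) :=
    fun r hr => by rw [hs r, if_pos (mem_filter.1 hr).2]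
  have hs_off : ∀ r, a r = false → s r = 0 := fun r hr => by simp [hs r, hr]
  have hs_pos := proportional_pos hcl hκ hsS
  have hsum := sum_proportional hκ hS hsS
  have hK := proportional_marginal_eq hγ0 hcl hκ hsS
  have hobj : ∀ x : Fin R → ℝ,
      ∑ r ∈ S, b r * u r (x r) = (∑ r ∈ S, b r * w r * x r ^ (1 - γ)) / (1 - γ) := fun x => by
    rw [sum_div]; exact sum_congr rfl fun r _ => by rw [hu]; ring
  have hp0 : 0 < 1 - γ := by linarith
  have hp1 : 1 - γ < 1 := by linarith
  have hK0 : 0 ≤ ((∑ j ∈ S, (b j * w j) ^ (1 / γ)) / cl) ^ γ :=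
    rpow_nonneg (div_pos (sum_rpow_pos hκ hS _) hcl).le _
  refine ⟨⟨fun r => ?_, hs_off, hsum.le⟩, fun t ht _ htc => ?_, fun t ht ht_off htc heq => ?_⟩
  · cases hr : a r
    · rw [hs_off r hr]
    · exact (hs_pos r (mem_filter.2 ⟨mem_univ _, hr⟩)).le
  · rw [hobj, hobj]
    exact div_le_div_of_nonneg_right (sum_mul_rpow_le_of_marginal_eq hp0 hp1
      (fun r hr => (hκ r hr).le) hs_pos (fun r _ => ht r) hK hK0 (hsum ▸ htc)) hp0.le
  · rw [hobj, hobj, div_left_inj' hp0.ne'] at heq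
    have hon := eqOn_of_sum_mul_rpow_eq_of_marginal_eq hp0 hp1 hκ hs_pos (fun r _ => ht r) hK
      hK0 (hsum ▸ htc) heq
    funext r
    cases hr : a r
    · rw [ht_off r hr, hs_off r hr]
    · exact hon r (mem_filter.2 ⟨mem_univ _, hr⟩)
end

section
/- Consider the serial network: L ≥ 2 links of equal capacity C > 0 connected serially, with L + 1 flows, where for l = 1,…,L flow l is local to link l and flow L+1 passes through all L links. Utilities are isoelastic, u_r(x) = w_r x^{1-γ}/(1-γ) with w_r > 0 and 0 < γ < 1. Let W = Σ_{l=1}^L w_l and χ = w_{L+1}/W. Then the optimal value of the NUM problem (maximize Σ_{r=1}^{L+1} u_r(x_r) subject to x_l + x_{L+1} ≤ C for each link l and x ≥ 0) equals W·C^{1-γ}·(1 + χ^{1/γ})^γ/(1−γ), attained at x_{L+1} = C·χ^{1/γ}/(1 + χ^{1/γ}) and x_l = C/(1 + χ^{1/γ}) for l ≤ L. Consequently, the ratio of the optimal social welfare to the social welfare W·C^{1-γ}/(1−γ) of the profile in which each link allocates all its capacity to its local flow and zero to the long flow equals ((w_{L+1}/W)^{1/γ} + 1)^γ. -/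
open Finset

/-!
If `x` is feasible and `y = x_{L+1}`, every local flow satisfies `x_l ≤ C - y`, so by monotonicity
the objective is at most `W ((C - y)^(1-γ) + χ y^(1-γ)) / (1-γ)`. Hölder's inequality with the
conjugate exponents `1/(1-γ)` and `1/γ`, applied to the vectors `((C - y)^(1-γ), y^(1-γ))` and
`(1, χ)`, bounds this by `W C^(1-γ) (1 + χ^(1/γ))^γ / (1-γ)`, with equality when
`(C - y) : y = 1 : χ^(1/γ)`. In the all-local profile the long flow gets `0` on every link, so only
the local flows contribute to the welfare.
-/

lemma rpow_add_mul_rpow_le {γ a b χ : ℝ} (hγ0 : 0 < γ) (hγ1 : γ < 1)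
    (ha : 0 ≤ a) (hb : 0 ≤ b) (hχ : 0 ≤ χ) :
    a ^ (1 - γ) + χ * b ^ (1 - γ) ≤ (a + b) ^ (1 - γ) * (1 + χ ^ (1 / γ)) ^ γ := by
  have hp : 1 - γ ≠ 0 := by linarith
  have h := Real.inner_le_Lp_mul_Lq_of_nonneg univ
    (Real.HolderConjugate.one_sub_inv_inv hγ0 hγ1)
    (f := ![a ^ (1 - γ), b ^ (1 - γ)]) (g := ![1, χ])
    (by simp [Fin.forall_fin_two, Real.rpow_nonneg, ha, hb])
    (by simp [Fin.forall_fin_two, hχ])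
  simpa [Fin.sum_univ_two, Real.rpow_rpow_inv, ha, hb, hp, mul_comm] using h

lemma rpow_add_mul_rpow_eq_at_split {γ c χ : ℝ} (hγ : γ ≠ 0) (hc : 0 ≤ c) (hχ : 0 ≤ χ) :
    (c / (1 + χ ^ (1 / γ))) ^ (1 - γ) + χ * (c * χ ^ (1 / γ) / (1 + χ ^ (1 / γ))) ^ (1 - γ) =
      c ^ (1 - γ) * (1 + χ ^ (1 / γ)) ^ γ := by
  set t := χ ^ (1 / γ)
  have ht : 0 ≤ t := Real.rpow_nonneg hχ _
  have hD : 0 < 1 + t := by linarith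
  have hχt : χ * t ^ (1 - γ) = t := by
    have hχ_eq : t ^ γ = χ := by simp only [t, one_div, Real.rpow_inv_rpow hχ hγ]
    rw [← hχ_eq, ← Real.rpow_add' ht (by norm_num), add_sub_cancel, Real.rpow_one]
  have hDγ : (1 + t) ^ γ * (1 + t) ^ (1 - γ) = 1 + t := by
    rw [← Real.rpow_add hD, add_sub_cancel, Real.rpow_one]
  rw [mul_div_right_comm, Real.mul_rpow (div_nonneg hc hD.le) ht, Real.div_rpow hc hD.le]
  field_simp
  linear_combination c ^ (1 - γ) * hχt - c ^ (1 - γ) * hDγ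

section SerialNetwork

variable {L : ℕ}

lemma sum_mul_rpow_le_of_add_last_le {p C : ℝ} (hp : 0 ≤ p) {w x : Fin (L + 1) → ℝ}
    (hw : ∀ r, 0 ≤ w r) (hx : ∀ r, 0 ≤ x r)
    (hxC : ∀ l : Fin L, x l.castSucc + x (Fin.last L) ≤ C) :
    ∑ r, w r * x r ^ p ≤
      (∑ l : Fin L, w l.castSucc) * (C - x (Fin.last L)) ^ p +
        w (Fin.last L) * x (Fin.last L) ^ p := by
  rw [Fin.sum_univ_castSucc, sum_mul]
  gcongr with l
  · exact hw _
  · exact hx _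
  · linarith [hxC l]

lemma sum_mul_rpow_le_of_serial {γ C χ : ℝ} (hL : 0 < L) (hγ0 : 0 < γ) (hγ1 : γ < 1)
    (hχ : 0 ≤ χ) {w x : Fin (L + 1) → ℝ} (hw : ∀ r, 0 ≤ w r)
    (hw_last : w (Fin.last L) = (∑ l : Fin L, w l.castSucc) * χ) (hx : ∀ r, 0 ≤ x r)
    (hxC : ∀ l : Fin L, x l.castSucc + x (Fin.last L) ≤ C) :
    ∑ r, w r * x r ^ (1 - γ) ≤
      (∑ l : Fin L, w l.castSucc) * C ^ (1 - γ) * (1 + χ ^ (1 / γ)) ^ γ := by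
  set W := ∑ l : Fin L, w l.castSucc
  set y := x (Fin.last L)
  have hy : y ≤ C := by
    have l : Fin L := ⟨0, hL⟩
    linarith [hxC l, hx l.castSucc]
  calc ∑ r, w r * x r ^ (1 - γ)
      ≤ W * (C - y) ^ (1 - γ) + w (Fin.last L) * y ^ (1 - γ) :=
        sum_mul_rpow_le_of_add_last_le (by linarith) hw hx hxC
    _ = W * ((C - y) ^ (1 - γ) + χ * y ^ (1 - γ)) := by rw [hw_last]; ring
    _ ≤ W * ((C - y + y) ^ (1 - γ) * (1 + χ ^ (1 / γ)) ^ γ) := by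
        gcongr
        · exact sum_nonneg fun l _ => hw _
        · exact rpow_add_mul_rpow_le hγ0 hγ1 (by linarith) (hx _) hχ
    _ = W * C ^ (1 - γ) * (1 + χ ^ (1 / γ)) ^ γ := by rw [sub_add_cancel, mul_assoc]

end SerialNetwork

lemma linkMin_eq_of_forall {L R : ℕ} {a : Fin L → Fin R → Bool} {S : Fin L → Fin R → ℝ}
    {r : Fin R} {v : ℝ} (hr : ∃ k, a k r = true) (hS : ∀ k, a k r = true → S k r = v) :
    linkMin a S r = v := by
  have hset : {v' : ℝ | ∃ k, a k r = true ∧ v' = S k r} = {v} := by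
    ext v'
    constructor
    · rintro ⟨k, hk, rfl⟩
      exact hS k hk
    · rintro rfl
      obtain ⟨k, hk⟩ := hr
      exact ⟨k, hk, (hS k hk).symm⟩
  rw [linkMin, hset, csInf_singleton]

section AllLocalProfile

variable {L : ℕ} {C : ℝ} {a : Fin L → Fin (L + 1) → Bool}
  {S : Fin L → Fin (L + 1) → ℝ}

lemma linkMin_castSucc_of_allLocal
    (ha : ∀ l r, a l r = (decide ((r : ℕ) = (l : ℕ)) || decide ((r : ℕ) = L)))
    (hS : ∀ l r, S l r = if (r : ℕ) = (l : ℕ) then C else 0) (l : Fin L) :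
    linkMin a S l.castSucc = C := by
  refine linkMin_eq_of_forall ⟨l, by simp [ha]⟩ fun k hk => ?_
  have hkl : (l : ℕ) = k := by simpa [ha, l.isLt.ne] using hk
  simp [hS, hkl]

lemma linkMin_last_of_allLocal (hL : 0 < L)
    (ha : ∀ l r, a l r = (decide ((r : ℕ) = (l : ℕ)) || decide ((r : ℕ) = L)))
    (hS : ∀ l r, S l r = if (r : ℕ) = (l : ℕ) then C else 0) :
    linkMin a S (Fin.last L) = 0 :=
  linkMin_eq_of_forall ⟨⟨0, hL⟩, by simp [ha]⟩ fun k _ => by simp [hS, k.isLt.ne']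

end AllLocalProfile

/-- optimal value of NUM for the serial network with isoelastic utilities:
it equals `W·C^(1-γ)·(1+χ^(1/γ))^γ/(1-γ)` (attained at the indicated point), and its
ratio to the welfare `W·C^(1-γ)/(1-γ)` of the all-local profile is `((w_{L+1}/W)^(1/γ)+1)^γ`. -/
theorem serial_network_num_optimum_and_ratio
    (L : ℕ) (hL : 2 ≤ L) (C γ : ℝ) (w : Fin (L + 1) → ℝ)
    (u : Fin (L + 1) → ℝ → ℝ)
    (W χ : ℝ) (xhat : Fin (L + 1) → ℝ)
    (a : Fin L → Fin (L + 1) → Bool) (S : Fin L → Fin (L + 1) → ℝ)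
    (hC : 0 < C) (hw : ∀ r, 0 < w r) (hγ0 : 0 < γ) (hγ1 : γ < 1)
    (hu : ∀ r x, u r x = w r * x ^ (1 - γ) / (1 - γ))
    (hW : W = ∑ l : Fin L, w (Fin.castSucc l))
    (hχ : χ = w (Fin.last L) / W)
    (hxhat : ∀ r, xhat r = if r = Fin.last L then
        C * χ ^ (1 / γ) / (1 + χ ^ (1 / γ)) else C / (1 + χ ^ (1 / γ)))
    (ha : ∀ l r, a l r = (decide ((r : ℕ) = (l : ℕ)) || decide ((r : ℕ) = L)))
    (hS : ∀ l r, S l r = if (r : ℕ) = (l : ℕ) then C else 0) :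
    -- the indicated point is feasible for NUM
    (∀ r, 0 ≤ xhat r) ∧
    (∀ l : Fin L, xhat (Fin.castSucc l) + xhat (Fin.last L) ≤ C) ∧
    -- it attains the claimed optimal value
    (∑ r, u r (xhat r)) = W * C ^ (1 - γ) * (1 + χ ^ (1 / γ)) ^ γ / (1 - γ) ∧
    -- and no feasible point does better
    (∀ x : Fin (L + 1) → ℝ, (∀ r, 0 ≤ x r) →
      (∀ l : Fin L, x (Fin.castSucc l) + x (Fin.last L) ≤ C) →
      (∑ r, u r (x r)) ≤ W * C ^ (1 - γ) * (1 + χ ^ (1 / γ)) ^ γ / (1 - γ)) ∧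
    -- the all-local profile has social welfare W·C^(1-γ)/(1-γ)
    welfare a u S = W * C ^ (1 - γ) / (1 - γ) ∧
    -- ratio of optimal welfare to the all-local profile's welfare
    (W * C ^ (1 - γ) * (1 + χ ^ (1 / γ)) ^ γ / (1 - γ)) / (W * C ^ (1 - γ) / (1 - γ)) =
      ((w (Fin.last L) / W) ^ (1 / γ) + 1) ^ γ := by
  have hp : 0 < 1 - γ := by linarith
  have hWpos : 0 < W := hW ▸ sum_pos (fun l _ => hw _) ⟨⟨0, by omega⟩, mem_univ _⟩
  have hχ0 : 0 ≤ χ := hχ ▸ div_nonneg (hw _).le hWpos.le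
  have hw_last : w (Fin.last L) = W * χ := by rw [hχ, mul_div_cancel₀ _ hWpos.ne']
  have hsum_u : ∀ x : Fin (L + 1) → ℝ,
      ∑ r, u r (x r) = (∑ r, w r * x r ^ (1 - γ)) / (1 - γ) :=
    fun x => by simp only [hu, sum_div]
  have hxhat_local : ∀ l : Fin L, xhat l.castSucc = C / (1 + χ ^ (1 / γ)) :=
    fun l => by rw [hxhat, if_neg (Fin.castSucc_lt_last l).ne]
  have hxhat_last : xhat (Fin.last L) = C * χ ^ (1 / γ) / (1 + χ ^ (1 / γ)) := by
    rw [hxhat, if_pos rfl]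
  refine ⟨fun r => ?_, fun l => ?_, ?_, fun x hx hxC => ?_, ?_, ?_⟩
  · rw [hxhat]
    split_ifs <;> positivity
  · rw [hxhat_local, hxhat_last, ← add_div, ← mul_one_add,
      mul_div_cancel_right₀ _ (by positivity)]
  · rw [hsum_u, Fin.sum_univ_castSucc]
    simp only [hxhat_local, hxhat_last, ← sum_mul, ← hW, hw_last]
    rw [mul_assoc W (C ^ (1 - γ)), ← rpow_add_mul_rpow_eq_at_split hγ0.ne' hC.le hχ0]
    ring
  · rw [hsum_u, hW]
    gcongr
    exact sum_mul_rpow_le_of_serial (by omega) hγ0 hγ1 hχ0 (fun r => (hw r).le) (hW ▸ hw_last)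
      hx hxC
  · rw [welfare, Fin.sum_univ_castSucc]
    simp only [hu, linkMin_castSucc_of_allLocal ha hS, linkMin_last_of_allLocal (by omega) ha hS,
      Real.zero_rpow hp.ne', mul_zero, zero_div, add_zero, ← sum_div, ← sum_mul, ← hW]
  · rw [← hχ, add_comm _ 1]
    field_simp
end
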